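/- arXiv:2302.01511 — 2 statements merged into one kernel-verified Lean document; each statement's English description precedes it below -/
import Mathlib

section
/- Let (Ω, P) be a probability space, X a finite index set with |X| ≥ 2, and for each x ∈ X let Z_x : Ω → ℝ be a random variable whose law is the Gaussian distribution N(μ_x, σ_x²), where μ_x ∈ ℝ and 0 ≤ σ_x ≤ 1. Set s = 2·log(|X|/2). Then E[ max_{x ∈ X} Z_x ] ≤ ∫ max_{x ∈ X} ( μ_x + √(s + z) · σ_x ) dν(z), where ν = Exp(1/2) is the exponential distribution with rate 1/2; equivalently, E[max_x Z_x] ≤ E[ max_x ( μ_x + √ζ σ_x ) ], where ζ = s + Z with Z ∼ Exp(1/2), i.e., ζ follows the two-parameter exponential distribution with location s and rate 1/2. -/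
/-!
Write `U z = max_x (μ x + √(s + z) σ x)`, a monotone continuous function. For `z ≥ 0` the union
bound and the Gaussian tail `P(N(m, σ²) > m + uσ) ≤ e^{-u²/2} / 2` give
`P(max_x Z x > U z) ≤ |X| e^{-(s + z)/2} / 2 = e^{-z/2} = ν(z, ∞)`; this is what fixes `s`.
Inverting `U` turns this into `P(max_x Z x > t) ≤ ν(U > t)` for `t ≥ U 0`, and the layer-cake
formula integrates this stochastic dominance into the inequality of expectations.
-/

open MeasureTheory ProbabilityTheory Real Set Filter Topology
open scoped ENNReal NNReal

section StochasticDominance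

variable {Ω Ω' : Type*} [MeasurableSpace Ω] [MeasurableSpace Ω'] {P : Measure Ω} {Q : Measure Ω'}
  {f : Ω → ℝ} {g : Ω' → ℝ}

lemma integral_le_integral_of_meas_lt_le_of_nonneg (hf : Integrable f P) (hg : Integrable g Q)
    (hg₀ : 0 ≤ᵐ[Q] g) (hfg : ∀ t, 0 < t → P {ω | t < f ω} ≤ Q {z | t < g z}) :
    ∫ ω, f ω ∂P ≤ ∫ z, g z ∂Q := by
  have hlint : ∫⁻ ω, ENNReal.ofReal (f ω) ∂P ≤ ∫⁻ z, ENNReal.ofReal (g z) ∂Q := calc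
    ∫⁻ ω, ENNReal.ofReal (f ω) ∂P = ∫⁻ ω, ENNReal.ofReal (max (f ω) 0) ∂P := by
      simp only [ENNReal.ofReal_max, ENNReal.ofReal_zero, max_eq_left zero_le]
    _ = ∫⁻ t in Ioi 0, P {ω | t < max (f ω) 0} :=
      lintegral_eq_lintegral_meas_lt P (.of_forall fun _ ↦ le_max_right (f _) 0)
        (hf.aemeasurable.sup_const 0)
    _ ≤ ∫⁻ t in Ioi 0, Q {z | t < g z} := by
      refine setLIntegral_mono' measurableSet_Ioi fun t (ht : 0 < t) ↦ ?_
      simpa only [lt_max_iff, ht.not_gt, or_false] using hfg t ht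
    _ = ∫⁻ z, ENNReal.ofReal (g z) ∂Q :=
      (lintegral_eq_lintegral_meas_lt Q hg₀ hg.aemeasurable).symm
  calc ∫ ω, f ω ∂P ≤ (∫⁻ ω, ENNReal.ofReal (f ω) ∂P).toReal := by
        rw [integral_eq_lintegral_pos_part_sub_lintegral_neg_part hf]
        exact sub_le_self _ ENNReal.toReal_nonneg
    _ ≤ (∫⁻ z, ENNReal.ofReal (g z) ∂Q).toReal :=
        ENNReal.toReal_mono hg.lintegral_lt_top.ne hlint
    _ = ∫ z, g z ∂Q := (integral_eq_lintegral_of_nonneg_ae hg₀ hg.aestronglyMeasurable).symm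

lemma integral_le_integral_of_meas_lt_le [IsProbabilityMeasure P] [IsProbabilityMeasure Q]
    (hf : Integrable f P) (hg : Integrable g Q) {c : ℝ} (hgc : ∀ᵐ z ∂Q, c ≤ g z)
    (hfg : ∀ t, c < t → P {ω | t < f ω} ≤ Q {z | t < g z}) :
    ∫ ω, f ω ∂P ≤ ∫ z, g z ∂Q := by
  have key := integral_le_integral_of_meas_lt_le_of_nonneg (f := fun ω ↦ f ω - c)
    (g := fun z ↦ g z - c) (hf.sub (integrable_const c)) (hg.sub (integrable_const c))
    (hgc.mono fun z hz ↦ sub_nonneg.2 hz) fun t ht ↦ by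
      simpa only [lt_sub_iff_add_lt'] using hfg (c + t) (by linarith)
  simpa [integral_sub hf (integrable_const c), integral_sub hg (integrable_const c)] using key

end StochasticDominance

lemma tendsto_measure_Ioi_atTop (Q : Measure ℝ) [IsFiniteMeasure Q] :
    Tendsto (fun z ↦ Q (Ioi z)) atTop (𝓝 0) := by
  have h := tendsto_measure_iInter_atTop (μ := Q)
    (fun z : ℝ ↦ measurableSet_Ioi.nullMeasurableSet)
    (fun _ _ h ↦ Ioi_subset_Ioi h) ⟨0, measure_ne_top Q _⟩
  rwa [show ⋂ z : ℝ, Ioi z = ∅ by ext x; simpa using ⟨x, le_rfl⟩, measure_empty] at h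

section TailTransfer

variable {Ω : Type*} [MeasurableSpace Ω] {P : Measure Ω} {Q : Measure ℝ} {f : Ω → ℝ} {U : ℝ → ℝ}

lemma meas_lt_le_meas_lt_of_meas_lt_le_meas_Ioi [IsFiniteMeasure Q] (hU : Monotone U)
    (hUc : Continuous U) (htail : ∀ z, 0 ≤ z → P {ω | U z < f ω} ≤ Q (Ioi z)) {t : ℝ}
    (ht : U 0 ≤ t) : P {ω | t < f ω} ≤ Q {z | t < U z} := by
  set S := {z | 0 ≤ z ∧ U z ≤ t}
  have hle : ∀ z ∈ S, P {ω | t < f ω} ≤ Q (Ioi z) := fun z hz ↦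
    (measure_mono fun ω (hω : t < f ω) ↦ hz.2.trans_lt hω).trans (htail z hz.1)
  by_cases hS : BddAbove S
  · have ha : sSup S ∈ S := (isClosed_Ici.inter (isClosed_le hUc continuous_const)).csSup_mem
      ⟨0, mem_Ici.2 le_rfl, ht⟩ hS
    refine (hle _ ha).trans (measure_mono fun z (hz : sSup S < z) ↦ ?_)
    by_contra hUz
    exact (le_csSup hS ⟨ha.1.trans hz.le, not_lt.1 hUz⟩).not_gt hz
  · have hS' : ∀ z, 0 ≤ z → z ∈ S := fun z hz ↦ by
      obtain ⟨w, hw, hzw⟩ := not_bddAbove_iff.1 hS z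
      exact ⟨hz, (hU hzw.le).trans hw.2⟩
    refine le_of_eq_of_le ?_ zero_le
    exact le_antisymm (ge_of_tendsto (tendsto_measure_Ioi_atTop Q)
      (eventually_ge_atTop 0 |>.mono fun z hz ↦ hle z (hS' z hz))) zero_le

lemma integral_le_integral_of_meas_lt_le_meas_Ioi [IsProbabilityMeasure P]
    [IsProbabilityMeasure Q] (hQ : ∀ᵐ z ∂Q, 0 ≤ z) (hU : Monotone U) (hUc : Continuous U)
    (hf : Integrable f P) (hUi : Integrable U Q)
    (htail : ∀ z, 0 ≤ z → P {ω | U z < f ω} ≤ Q (Ioi z)) :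
    ∫ ω, f ω ∂P ≤ ∫ z, U z ∂Q :=
  integral_le_integral_of_meas_lt_le hf hUi (hQ.mono fun _ hz ↦ hU hz) fun _ ht ↦
    meas_lt_le_meas_lt_of_meas_lt_le_meas_Ioi hU hUc htail ht.le

end TailTransfer

section GaussianTail

variable {m : ℝ} {v : ℝ≥0}

lemma gaussianReal_Ioi_self (hv : v ≠ 0) : gaussianReal m v (Ioi m) = 2⁻¹ := by
  have := nullSingletonClass_gaussianReal (μ := m) hv
  -- reflection `x ↦ 2m - x` preserves `N(m, v)` and exchanges `Ioi m` with `Iio m`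
  have hsymm : gaussianReal m v (Ioi m)ᶜ = gaussianReal m v (Ioi m) := by
    conv_rhs => rw [← show 2 * m - m = m by ring, ← gaussianReal_map_const_sub (2 * m),
      Measure.map_apply (by fun_prop) measurableSet_Ioi]
    rw [compl_Ioi, ← measure_congr Iio_ae_eq_Iic]
    congr 1
    ext x
    simp only [mem_Iio, mem_preimage, mem_Ioi]
    constructor <;> intro h <;> linarith
  have h := measure_add_measure_compl (μ := gaussianReal m v) (measurableSet_Ioi (a := m))
  rw [hsymm, measure_univ, ← two_mul] at h
  exact ENNReal.eq_inv_of_mul_eq_one_left (by rwa [mul_comm])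

lemma gaussianPDFReal_le_exp_mul_gaussianPDFReal_add {u x : ℝ} (hu : 0 ≤ u) (hx : m + u ≤ x) :
    gaussianPDFReal m v x ≤ exp (-u ^ 2 / (2 * v)) * gaussianPDFReal (m + u) v x := by
  simp only [gaussianPDFReal_def]
  rw [mul_left_comm, ← exp_add]
  gcongr
  rw [← add_div]
  gcongr
  nlinarith [mul_nonneg hu (sub_nonneg.2 hx)]

lemma gaussianReal_Ioi_add_le (hv : v ≠ 0) {u : ℝ} (hu : 0 ≤ u) :
    gaussianReal m v (Ioi (m + u)) ≤ ENNReal.ofReal (exp (-u ^ 2 / (2 * v))) * 2⁻¹ := calc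
  gaussianReal m v (Ioi (m + u))
      ≤ ∫⁻ x in Ioi (m + u),
          ENNReal.ofReal (exp (-u ^ 2 / (2 * v))) * gaussianPDF (m + u) v x := by
    rw [gaussianReal_apply _ hv]
    refine setLIntegral_mono' measurableSet_Ioi fun x hx ↦ ?_
    rw [gaussianPDF, gaussianPDF, ← ENNReal.ofReal_mul (exp_pos _).le]
    exact ENNReal.ofReal_le_ofReal
      (gaussianPDFReal_le_exp_mul_gaussianPDFReal_add hu (le_of_lt hx))
  _ = ENNReal.ofReal (exp (-u ^ 2 / (2 * v))) * 2⁻¹ := by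
    rw [lintegral_const_mul _ (measurable_gaussianPDF _ _), ← gaussianReal_apply _ hv,
      gaussianReal_Ioi_self hv]

lemma gaussianReal_Ioi_add_mul_le {σ u : ℝ} (hσ : 0 ≤ σ) (hu : 0 ≤ u) :
    gaussianReal m (σ ^ 2).toNNReal (Ioi (m + u * σ)) ≤
      ENNReal.ofReal (exp (-u ^ 2 / 2)) * 2⁻¹ := by
  rcases hσ.eq_or_lt with rfl | hσ
  · simp [gaussianReal_zero_var]
  · convert gaussianReal_Ioi_add_le (m := m) (v := (σ ^ 2).toNNReal) (by positivity)
      (mul_nonneg hu hσ.le) using 4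
    rw [Real.coe_toNNReal _ (sq_nonneg σ)]
    field_simp

end GaussianTail

section Exponential

variable {r : ℝ}

lemma ae_nonneg_expMeasure : ∀ᵐ z ∂expMeasure r, 0 ≤ z := by
  simp only [ae_iff, not_le]
  exact (withDensity_apply _ measurableSet_Iio).trans (lintegral_exponentialPDF_of_nonpos le_rfl)

lemma expMeasure_Ioi (hr : 0 < r) {a : ℝ} (ha : 0 ≤ a) :
    expMeasure r (Ioi a) = ENNReal.ofReal (exp (-(r * a))) := by
  have := isProbabilityMeasure_expMeasure hr
  rw [← compl_Iic, prob_compl_eq_one_sub measurableSet_Iic, ← ofReal_cdf, cdf_expMeasure_eq hr,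
    if_pos ha, ← ENNReal.ofReal_one,
    ← ENNReal.ofReal_sub _ (sub_nonneg.2 (exp_le_one_iff.2 (by nlinarith))), sub_sub_cancel]

lemma integrable_id_expMeasure (hr : 0 < r) : Integrable id (expMeasure r) := by
  refine ⟨aestronglyMeasurable_id, (hasFiniteIntegral_iff_ofReal ae_nonneg_expMeasure).2 ?_⟩
  rw [lintegral_eq_lintegral_meas_lt _ ae_nonneg_expMeasure aemeasurable_id]
  refine (setLIntegral_congr_fun measurableSet_Ioi fun t ht ↦
    expMeasure_Ioi hr (le_of_lt ht)).trans_lt ?_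
  simp_rw [neg_mul_eq_neg_mul]
  exact (exp_neg_integrableOn_Ioi 0 hr).setLIntegral_lt_top

lemma integrable_sqrt_const_add_expMeasure (hr : 0 < r) (s : ℝ) :
    Integrable (fun z ↦ √(s + z)) (expMeasure r) := by
  have := isProbabilityMeasure_expMeasure hr
  refine Integrable.mono' (g := fun z ↦ 1 + |s + z|) ?_ (by fun_prop) (.of_forall fun z ↦ ?_)
  · exact (integrable_const 1).add ((integrable_const s).add (integrable_id_expMeasure hr)).abs
  · rw [norm_of_nonneg (sqrt_nonneg _), sqrt_le_iff]
    constructor <;> nlinarith [abs_nonneg (s + z), le_abs_self (s + z)]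

end Exponential

section GaussianMaximum

variable {Ω ι : Type*} [MeasurableSpace Ω] {P : Measure Ω}

lemma Integrable.finset_sup' {t : Finset ι} (ht : t.Nonempty) {g : ι → Ω → ℝ}
    (hg : ∀ i ∈ t, Integrable (g i) P) : Integrable (fun ω ↦ t.sup' ht fun i ↦ g i ω) P := by
  induction ht using Finset.Nonempty.cons_induction with
  | singleton i => simpa using hg i (Finset.mem_singleton_self i)
  | cons i t hi ht ih =>
    simp only [Finset.sup'_cons ht]
    exact (hg i (Finset.mem_cons_self i t)).sup (ih fun j hj ↦ hg j (Finset.mem_cons_of_mem hj))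

lemma measure_sup'_lt_sup'_le {t : Finset ι} (ht : t.Nonempty) (Z : ι → Ω → ℝ) (b : ι → ℝ)
    {ε : ℝ≥0∞} (h : ∀ i ∈ t, P {ω | b i < Z i ω} ≤ ε) :
    P {ω | t.sup' ht b < t.sup' ht fun i ↦ Z i ω} ≤ t.card * ε := calc
  _ ≤ P (⋃ i ∈ t, {ω | b i < Z i ω}) := measure_mono fun ω hω ↦ by
      obtain ⟨i, hi, hmax⟩ := t.exists_mem_eq_sup' ht fun i ↦ Z i ω
      exact mem_biUnion hi ((t.le_sup' b hi).trans_lt (hmax ▸ hω))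
  _ ≤ ∑ i ∈ t, P {ω | b i < Z i ω} := measure_biUnion_finset_le t _
  _ ≤ ∑ i ∈ t, ε := Finset.sum_le_sum h
  _ = t.card * ε := by rw [Finset.sum_const, nsmul_eq_mul]

lemma integrable_of_map_eq_gaussianReal {X : Ω → ℝ} {m : ℝ} {v : ℝ≥0}
    (hX : P.map X = gaussianReal m v) : Integrable X P :=
  (hX ▸ (memLp_id_gaussianReal 1).integrable le_rfl).comp_aemeasurable
    (aemeasurable_of_map_neZero (by rw [hX]; infer_instance))

lemma measure_sup'_lt_sup'_gaussian_le [Fintype ι] [Nonempty ι] {μ σ : ι → ℝ} (hσ : ∀ i, 0 ≤ σ i)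
    {Z : ι → Ω → ℝ} (hZ : ∀ i, P.map (Z i) = gaussianReal (μ i) (σ i ^ 2).toNNReal)
    {u : ℝ} (hu : 0 ≤ u) :
    P {ω | (Finset.univ.sup' Finset.univ_nonempty fun i ↦ μ i + u * σ i) <
        Finset.univ.sup' Finset.univ_nonempty fun i ↦ Z i ω} ≤
      Fintype.card ι * (ENNReal.ofReal (exp (-u ^ 2 / 2)) * 2⁻¹) := by
  refine measure_sup'_lt_sup'_le _ Z _ fun i _ ↦ ?_
  rw [show {ω | μ i + u * σ i < Z i ω} = Z i ⁻¹' Ioi (μ i + u * σ i) from rfl,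
    ← Measure.map_apply_of_aemeasurable
      (aemeasurable_of_map_neZero (by rw [hZ i]; infer_instance)) measurableSet_Ioi, hZ i]
  exact gaussianReal_Ioi_add_mul_le (hσ i) hu

end GaussianMaximum

theorem expected_max_gaussian_le_randomized_ucb_general
    {Ω : Type*} [MeasurableSpace Ω] (P : Measure Ω) [IsProbabilityMeasure P]
    {X : Type*} [Fintype X] [Nonempty X] (hX : 2 ≤ Fintype.card X)
    (μ : X → ℝ) (σ : X → ℝ) (hσ : ∀ x, 0 ≤ σ x)
    (Z : X → Ω → ℝ)
    (hZ : ∀ x, Measure.map (Z x) P = gaussianReal (μ x) (Real.toNNReal ((σ x) ^ 2)))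
    (s : ℝ) (hs : s = 2 * Real.log ((Fintype.card X : ℝ) / 2)) :
    ∫ ω, Finset.univ.sup' Finset.univ_nonempty (fun x => Z x ω) ∂P ≤
      ∫ z, Finset.univ.sup' Finset.univ_nonempty
          (fun x => μ x + Real.sqrt (s + z) * σ x) ∂(expMeasure (1 / 2)) := by
  have := isProbabilityMeasure_expMeasure (by norm_num : (0 : ℝ) < 1 / 2)
  have hcard : (2 : ℝ) ≤ Fintype.card X := by exact_mod_cast hX
  have hs₀ : 0 ≤ s := hs ▸ mul_nonneg zero_le_two (log_nonneg (by linarith))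
  refine integral_le_integral_of_meas_lt_le_meas_Ioi ae_nonneg_expMeasure
    (fun _ _ hab ↦ Finset.sup'_mono_fun fun x _ ↦ by gcongr; exact hσ x)
    (by fun_prop)
    (Integrable.finset_sup' _ fun x _ ↦ integrable_of_map_eq_gaussianReal (hZ x))
    (Integrable.finset_sup' _ fun x _ ↦ (integrable_const _).add
      ((integrable_sqrt_const_add_expMeasure (by norm_num) s).mul_const _))
    fun z hz ↦ (measure_sup'_lt_sup'_gaussian_le hσ hZ (sqrt_nonneg (s + z))).trans_eq ?_
  rw [sq_sqrt (by linarith), expMeasure_Ioi (by norm_num) hz, ← ENNReal.ofReal_natCast,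
    ← ENNReal.ofReal_ofNat 2, ← ENNReal.ofReal_inv_of_pos two_pos,
    ← ENNReal.ofReal_mul (exp_pos _).le, ← ENNReal.ofReal_mul (by positivity)]
  congr 1
  rw [hs, neg_div, add_div, neg_add, exp_add, mul_div_cancel_left₀ _ two_ne_zero, exp_neg,
    exp_log (by linarith)]
  field_simp

theorem expected_max_gaussian_le_randomized_ucb
    {Ω : Type*} [MeasurableSpace Ω] (P : Measure Ω) [IsProbabilityMeasure P]
    {X : Type*} [Fintype X] [Nonempty X] (hX : 2 ≤ Fintype.card X)
    (μ : X → ℝ) (σ : X → ℝ) (hσ : ∀ x, 0 ≤ σ x) (hσ1 : ∀ x, σ x ≤ 1)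
    (Z : X → Ω → ℝ)
    (hZ : ∀ x, Measure.map (Z x) P = gaussianReal (μ x) (Real.toNNReal ((σ x) ^ 2)))
    (s : ℝ) (hs : s = 2 * Real.log ((Fintype.card X : ℝ) / 2)) :
    ∫ ω, Finset.univ.sup' Finset.univ_nonempty (fun x => Z x ω) ∂P ≤
      ∫ z, Finset.univ.sup' Finset.univ_nonempty
          (fun x => μ x + Real.sqrt (s + z) * σ x) ∂(expMeasure (1 / 2)) :=
  expected_max_gaussian_le_randomized_ucb_general P hX μ σ hσ Z hZ s hs
end

section
/- Let (Ω, P) be a probability space, X a finite nonempty index set, and for each x ∈ X let Z_x : Ω → ℝ be a random variable whose law is the Gaussian distribution N(μ_x, σ_x²), where μ_x ∈ ℝ and 0 ≤ σ_x ≤ 1. Let ζ : Ω → ℝ be a nonnegative random variable independent of (Z_x)_{x ∈ X} such that exp(−ζ/2) is integrable. Then E[ max_{x ∈ X} max(0, Z_x − μ_x − √ζ · σ_x) ] ≤ (|X|/√(2π)) · E[ exp(−ζ/2) ]. -/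
/-!
Bound the maximum by the sum over `X` and treat one `x` at a time. By independence, `Z x` can be
integrated out for a fixed value `t` of `ζ`. Writing `Z x = μ x + σ x * W` with `W` standard
normal, `(Z x - μ x - √t σ x)⁺ = σ x (W - √t)⁺`, and since the standard density satisfies
`φ' = -w φ`, `E[(W - √t)⁺] ≤ ∫_{√t}^∞ w φ(w) dw = φ(√t) = exp(-t/2) / √(2π)`.
-/

open MeasureTheory ProbabilityTheory Real
open Filter Set Topology
open scoped NNReal

lemma gaussianPDFReal_zero_one (x : ℝ) :
    gaussianPDFReal 0 1 x = exp (-x ^ 2 / 2) / √(2 * π) := by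
  simp [gaussianPDFReal, div_eq_inv_mul]

lemma hasDerivAt_gaussianPDFReal_zero_one (x : ℝ) :
    HasDerivAt (gaussianPDFReal 0 1) (-(x * gaussianPDFReal 0 1 x)) x := by
  rw [gaussianPDFReal_zero_one, funext gaussianPDFReal_zero_one]
  refine (((hasDerivAt_pow 2 x).fun_neg.div_const 2).exp.div_const (√(2 * π))).congr_deriv ?_
  ring

lemma tendsto_gaussianPDFReal_zero_one_atTop : Tendsto (gaussianPDFReal 0 1) atTop (𝓝 0) := by
  rw [funext gaussianPDFReal_zero_one, ← zero_div (√(2 * π))]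
  refine (tendsto_exp_atBot.comp ?_).div_const _
  exact (tendsto_neg_atTop_atBot.comp (tendsto_pow_atTop two_ne_zero)).atBot_div_const two_pos

lemma integrableOn_Ioi_mul_gaussianPDFReal_zero_one {c : ℝ} (hc : 0 ≤ c) :
    IntegrableOn (fun x => x * gaussianPDFReal 0 1 x) (Ioi c) :=
  integrableOn_Ioi_deriv_of_nonneg' (g := fun x => -gaussianPDFReal 0 1 x) (l := 0)
    (fun x _ => by simpa using (hasDerivAt_gaussianPDFReal_zero_one x).fun_neg)
    (fun x hx => mul_nonneg (hc.trans hx.out.le) (gaussianPDFReal_nonneg _ _ _))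
    (by simpa using tendsto_gaussianPDFReal_zero_one_atTop.neg)

lemma integral_Ioi_mul_gaussianPDFReal_zero_one {c : ℝ} (hc : 0 ≤ c) :
    ∫ x in Ioi c, x * gaussianPDFReal 0 1 x = gaussianPDFReal 0 1 c := by
  rw [integral_Ioi_of_hasDerivAt_of_nonneg' (g := fun x => -gaussianPDFReal 0 1 x) (l := 0)
    (fun x _ => by simpa using (hasDerivAt_gaussianPDFReal_zero_one x).fun_neg)
    (fun x hx => mul_nonneg (hc.trans hx.out.le) (gaussianPDFReal_nonneg _ _ _))
    (by simpa using tendsto_gaussianPDFReal_zero_one_atTop.neg)]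
  ring

lemma integral_max_zero_sub_gaussianReal_zero_one_le {c : ℝ} (hc : 0 ≤ c) :
    ∫ x, max 0 (x - c) ∂gaussianReal 0 1 ≤ gaussianPDFReal 0 1 c := by
  rw [integral_gaussianReal_eq_integral_smul one_ne_zero,
    ← integral_Ioi_mul_gaussianPDFReal_zero_one hc, ← integral_indicator measurableSet_Ioi]
  refine integral_mono_of_nonneg (ae_of_all _ fun x => ?_)
    ((integrable_indicator_iff measurableSet_Ioi).2
      (integrableOn_Ioi_mul_gaussianPDFReal_zero_one hc)) (ae_of_all _ fun x => ?_)
  · exact smul_nonneg (gaussianPDFReal_nonneg _ _ _) (le_max_left _ _)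
  dsimp only
  rcases lt_or_ge c x with hx | hx
  · rw [indicator_of_mem (mem_Ioi.2 hx), smul_eq_mul, max_eq_right (sub_nonneg.2 hx.le), mul_comm]
    exact mul_le_mul_of_nonneg_right (sub_le_self x hc) (gaussianPDFReal_nonneg 0 1 x)
  · rw [indicator_of_notMem (notMem_Ioi.2 hx), max_eq_left (sub_nonpos.2 hx), smul_zero]

lemma gaussianReal_eq_map_zero_one (m s : ℝ) :
    gaussianReal m (s ^ 2).toNNReal = (gaussianReal 0 1).map (fun x => m + s * x) := by
  change _ = (gaussianReal 0 1).map ((m + ·) ∘ (s * ·))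
  rw [← Measure.map_map (measurable_const_add m) (measurable_const_mul s),
    gaussianReal_map_const_mul, gaussianReal_map_const_add]
  congr 1
  · ring
  · ext; simp [sq_nonneg]

lemma integral_max_zero_sub_gaussianReal_le (m : ℝ) {s c : ℝ} (hs : 0 ≤ s) (hc : 0 ≤ c) :
    ∫ x, max 0 (x - m - c * s) ∂gaussianReal m (s ^ 2).toNNReal ≤ s * gaussianPDFReal 0 1 c := by
  rw [gaussianReal_eq_map_zero_one, integral_map (by fun_prop) (by fun_prop)]
  calc ∫ x, max 0 (m + s * x - m - c * s) ∂gaussianReal 0 1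
      = ∫ x, s * max 0 (x - c) ∂gaussianReal 0 1 := by
        congr 1 with x
        rw [mul_max_of_nonneg _ _ hs]
        ring_nf
    _ ≤ s * gaussianPDFReal 0 1 c := by
        rw [integral_const_mul]
        exact mul_le_mul_of_nonneg_left (integral_max_zero_sub_gaussianReal_zero_one_le hc) hs

lemma integrable_max_zero_sub_gaussianReal (m c : ℝ) (v : ℝ≥0) :
    Integrable (fun x => max 0 (x - c)) (gaussianReal m v) := by
  simpa [max_comm] using
    (((memLp_id_gaussianReal 1).integrable le_rfl).sub (integrable_const c)).pos_part

lemma ProbabilityTheory.IndepFun.integral_comp_le {Ω α β : Type*} [MeasurableSpace Ω]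
    [MeasurableSpace α] [MeasurableSpace β] {P : Measure Ω} [IsFiniteMeasure P]
    {ξ : Ω → α} {Y : Ω → β}
    (hind : IndepFun ξ Y P) (hξ : AEMeasurable ξ P) (hY : AEMeasurable Y P)
    {F : α × β → ℝ} (hF : Measurable F) (hF0 : 0 ≤ F) {h : α → ℝ} (hh : Integrable h (P.map ξ))
    (hFint : ∀ a, Integrable (fun b => F (a, b)) (P.map Y))
    (hle : ∀ a, ∫ b, F (a, b) ∂P.map Y ≤ h a) :
    ∫ ω, F (ξ ω, Y ω) ∂P ≤ ∫ a, h a ∂P.map ξ := by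
  have hprod := (indepFun_iff_map_prod_eq_prod_map_map hξ hY).1 hind
  have hFprod : Integrable F ((P.map ξ).prod (P.map Y)) := by
    refine (integrable_prod_iff hF.aestronglyMeasurable).2 ⟨ae_of_all _ hFint, hh.mono' ?_ ?_⟩
    · exact hF.aestronglyMeasurable.norm.integral_prod_right'
    · filter_upwards with a
      simp_rw [Real.norm_eq_abs, abs_of_nonneg (hF0 _)]
      rw [abs_of_nonneg (integral_nonneg fun b => hF0 (a, b))]
      exact hle a
  calc ∫ ω, F (ξ ω, Y ω) ∂P = ∫ p, F p ∂(P.map ξ).prod (P.map Y) := by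
        rw [← hprod, integral_map (hξ.prodMk hY) hF.aestronglyMeasurable]
    _ = ∫ a, ∫ b, F (a, b) ∂P.map Y ∂P.map ξ := integral_prod F hFprod
    _ ≤ ∫ a, h a ∂P.map ξ := integral_mono hFprod.integral_prod_left hh hle

lemma integrable_max_zero_sub_sqrt_mul {Ω : Type*} [MeasurableSpace Ω] {P : Measure Ω}
    [IsFiniteMeasure P] {Y ζ : Ω → ℝ} (hY : Integrable Y P) (hζ : AEMeasurable ζ P) (m : ℝ)
    {s : ℝ} (hs : 0 ≤ s) :
    Integrable (fun ω => max 0 (Y ω - m - √(ζ ω) * s)) P := by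
  refine (hY.sub (integrable_const m)).abs.mono' (by fun_prop) (ae_of_all _ fun ω => ?_)
  rw [Real.norm_eq_abs, abs_of_nonneg (le_max_left _ _)]
  exact max_le (abs_nonneg _)
    ((sub_le_self _ (mul_nonneg (sqrt_nonneg _) hs)).trans (le_abs_self _))

lemma integral_max_zero_sub_sqrt_mul_le {Ω : Type*} [MeasurableSpace Ω] {P : Measure Ω}
    [IsProbabilityMeasure P] {Y ζ : Ω → ℝ} {m s : ℝ} (hs : 0 ≤ s)
    (hY : P.map Y = gaussianReal m (s ^ 2).toNNReal) (hζ : ∀ ω, 0 ≤ ζ ω)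
    (hζm : AEMeasurable ζ P) (hind : IndepFun ζ Y P)
    (hint : Integrable (fun ω => exp (-ζ ω / 2)) P) :
    ∫ ω, max 0 (Y ω - m - √(ζ ω) * s) ∂P ≤ s / √(2 * π) * ∫ ω, exp (-ζ ω / 2) ∂P := by
  have hYm : AEMeasurable Y P := .of_map_ne_zero (hY ▸ IsProbabilityMeasure.ne_zero _)
  have hφ (ω : Ω) : s * gaussianPDFReal 0 1 √(ζ ω) = s / √(2 * π) * exp (-ζ ω / 2) := by
    rw [gaussianPDFReal_zero_one, sq_sqrt (hζ ω)]
    ring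
  have hh : Measurable fun t => s * gaussianPDFReal 0 1 √t :=
    ((measurable_gaussianPDFReal 0 1).comp continuous_sqrt.measurable).const_mul s
  have hbound := hind.integral_comp_le hζm hYm (F := fun p => max 0 (p.2 - m - √p.1 * s))
    (h := fun t => s * gaussianPDFReal 0 1 √t) (by fun_prop) (fun p => le_max_left _ _)
    ((integrable_map_measure hh.aestronglyMeasurable hζm).2 ((hint.const_mul _).congr
      (ae_of_all _ fun ω => (hφ ω).symm)))
    (fun t => by
      simpa only [hY, sub_sub] using integrable_max_zero_sub_gaussianReal m (m + √t * s) _)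
    (fun t => hY ▸ integral_max_zero_sub_gaussianReal_le m hs (sqrt_nonneg t))
  rw [integral_map hζm hh.aestronglyMeasurable] at hbound
  simpa only [hφ, integral_const_mul] using hbound

lemma integral_finset_sup'_le_sum_integral {Ω ι : Type*} [MeasurableSpace Ω] {P : Measure Ω}
    {s : Finset ι} (hs : s.Nonempty) {f : ι → Ω → ℝ} (hf0 : ∀ i, 0 ≤ f i)
    (hf : ∀ i ∈ s, Integrable (f i) P) :
    ∫ ω, s.sup' hs (fun i => f i ω) ∂P ≤ ∑ i ∈ s, ∫ ω, f i ω ∂P := by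
  obtain ⟨i₀, hi₀⟩ := hs
  rw [← integral_finsetSum s hf]
  exact integral_mono_of_nonneg
    (ae_of_all _ fun ω => (hf0 i₀ ω).trans (Finset.le_sup' (fun i => f i ω) hi₀))
    (integrable_finsetSum s hf)
    (ae_of_all _ fun ω => Finset.sup'_le _ _ fun i hi =>
      Finset.single_le_sum (fun j _ => hf0 j ω) hi)

theorem R1_bound_randomized_ucb
    {Ω : Type*} [MeasurableSpace Ω] (P : Measure Ω) [IsProbabilityMeasure P]
    {X : Type*} [Fintype X] [Nonempty X]
    (μ : X → ℝ) (σ : X → ℝ) (hσ : ∀ x, 0 ≤ σ x) (hσ1 : ∀ x, σ x ≤ 1)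
    (Z : X → Ω → ℝ)
    (hZ : ∀ x, Measure.map (Z x) P = gaussianReal (μ x) (Real.toNNReal ((σ x) ^ 2)))
    (ζ : Ω → ℝ) (hζ : ∀ ω, 0 ≤ ζ ω)
    (hindep : IndepFun ζ (fun ω => fun x => Z x ω) P)
    (hint : Integrable (fun ω => Real.exp (-ζ ω / 2)) P) :
    ∫ ω, Finset.univ.sup' Finset.univ_nonempty
        (fun x => max 0 (Z x ω - μ x - Real.sqrt (ζ ω) * σ x)) ∂P ≤
      ((Fintype.card X : ℝ) / Real.sqrt (2 * π)) * ∫ ω, Real.exp (-ζ ω / 2) ∂P := by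
  have hζm : AEMeasurable ζ P := by
    convert (aemeasurable_of_aemeasurable_exp hint.aemeasurable).const_mul (-2) using 1
    ext ω
    ring
  refine (integral_finset_sup'_le_sum_integral _ (fun x ω => le_max_left _ _) fun x _ =>
    integrable_max_zero_sub_sqrt_mul (HasGaussianLaw.integrable ⟨hZ x ▸ inferInstance⟩) hζm
      (μ x) (hσ x)).trans ?_
  calc ∑ x, ∫ ω, max 0 (Z x ω - μ x - √(ζ ω) * σ x) ∂P
      ≤ ∑ _x : X, 1 / √(2 * π) * ∫ ω, exp (-ζ ω / 2) ∂P := by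
        refine Finset.sum_le_sum fun x _ => ?_
        refine (integral_max_zero_sub_sqrt_mul_le (hσ x) (hZ x) hζ hζm
          (hindep.comp measurable_id (measurable_pi_apply x)) hint).trans ?_
        gcongr
        exact hσ1 x
    _ = (Fintype.card X : ℝ) / √(2 * π) * ∫ ω, exp (-ζ ω / 2) ∂P := by
        rw [Finset.sum_const, Finset.card_univ, nsmul_eq_mul]
        ring
end
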